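/- arXiv:1705.08233 — 4 statements merged into one kernel-verified Lean document; each statement's English description precedes it below -/
import Mathlib

section
/- For the density p(y) ∝ [(Ey+g)^2+b^2]^{-(ν+1)} exp((2gν/b) arctan((Ey+g)/b)) with E, b > 0, the tail behavior satisfies p(y) * |y|^{2(ν+1)} → h(sgn y) as |y| → ∞, where h(s) = exp(π g ν s / b) / (N E^{2(ν+1)}). -/
open Real Filter

theorem stmt_1 (E b g ν N : ℝ) (hE : 0 < E) (hb : 0 < b) (hν : 0 < ν) (hN : 0 < N)
    (p : ℝ → ℝ)
    (hp : ∀ y, p y = (1 / N) * ((E * y + g) ^ 2 + b ^ 2) ^ (-(ν + 1)) *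
        Real.exp ((2 * g * ν / b) * Real.arctan ((E * y + g) / b)))
    (h : ℝ → ℝ)
    (hh : ∀ s, h s = Real.exp (π * g * ν * s / b) / (N * E ^ (2 * (ν + 1)))) :
    Tendsto (fun y : ℝ => p y * y ^ (2 * (ν + 1))) atTop (nhds (h 1)) ∧
    Tendsto (fun y : ℝ => p y * |y| ^ (2 * (ν + 1))) atBot (nhds (h (-1))) := by
  have hb' : b ≠ 0 := hb.ne'
  have hE2 : (0:ℝ) < E ^ 2 := by positivity
  set c : ℝ := 2 * g * ν / b with hc
  set q : ℝ → ℝ := fun y => ((E * y + g) ^ 2 + b ^ 2) / y ^ 2 with hqdef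
  -- the key algebraic identity, valid whenever y ≠ 0
  have key : ∀ y : ℝ, y ≠ 0 →
      p y * (y ^ 2 : ℝ) ^ (ν + 1) =
        (1 / N) * (q y) ^ (-(ν + 1)) * Real.exp (c * Real.arctan ((E * y + g) / b)) := by
    intro y hy
    have hA : (0:ℝ) ≤ (E * y + g) ^ 2 + b ^ 2 := by positivity
    have h1 : (q y) ^ (-(ν + 1)) =
        ((E * y + g) ^ 2 + b ^ 2) ^ (-(ν + 1)) * (y ^ 2 : ℝ) ^ (ν + 1) := by
      rw [hqdef]
      rw [Real.div_rpow hA (sq_nonneg y), Real.rpow_neg (sq_nonneg y) (ν + 1),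
        div_inv_eq_mul]
    rw [hp, h1]
    ring
  -- value of the limit
  have hlim : ∀ s : ℝ, s = 1 ∨ s = -1 →
      (1 / N) * (E ^ 2 : ℝ) ^ (-(ν + 1)) * Real.exp (c * (s * (π / 2))) = h s := by
    intro s _
    rw [hh]
    have hpow : (E ^ 2 : ℝ) ^ (ν + 1) = E ^ (2 * (ν + 1)) := by
      rw [Real.rpow_mul hE.le, Real.rpow_two]
    rw [Real.rpow_neg (sq_nonneg E), hpow]
    have : c * (s * (π / 2)) = π * g * ν * s / b := by rw [hc]; ring
    rw [this]
    field_simp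
  -- continuity at E^2
  have hcont : ContinuousAt (fun x : ℝ => x ^ (-(ν + 1))) (E ^ 2) :=
    Real.continuousAt_rpow_const _ _ (Or.inl hE2.ne')
  constructor
  · -- atTop
    have hq : Tendsto q atTop (nhds (E ^ 2)) := by
      have h1 : Tendsto (fun y : ℝ => (E + g * y⁻¹) ^ 2 + (b * y⁻¹) ^ 2) atTop
          (nhds ((E + g * 0) ^ 2 + (b * 0) ^ 2)) := by
        exact (((tendsto_const_nhds.add (tendsto_inv_atTop_zero.const_mul g)).pow 2).add
          ((tendsto_inv_atTop_zero.const_mul b).pow 2))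
      simp only [mul_zero, add_zero, zero_pow, ne_eq, OfNat.ofNat_ne_zero,
        not_false_eq_true] at h1
      refine Tendsto.congr' ?_ h1
      filter_upwards [eventually_gt_atTop (0:ℝ)] with y hy
      have hy' : y ≠ 0 := hy.ne'
      rw [hqdef]
      field_simp
    have harg : Tendsto (fun y : ℝ => (E * y + g) / b) atTop atTop := by
      apply Tendsto.atTop_div_const hb
      exact tendsto_atTop_add_const_right _ g (tendsto_id.const_mul_atTop hE)
    have harctan : Tendsto (fun y : ℝ => Real.arctan ((E * y + g) / b)) atTop
        (nhds (π / 2)) :=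
      (Real.tendsto_arctan_atTop.mono_right nhdsWithin_le_nhds).comp harg
    have hF : Tendsto (fun y : ℝ => (1 / N) * (q y) ^ (-(ν + 1)) *
        Real.exp (c * Real.arctan ((E * y + g) / b))) atTop
        (nhds ((1 / N) * (E ^ 2 : ℝ) ^ (-(ν + 1)) * Real.exp (c * (π / 2)))) :=
      (tendsto_const_nhds.mul (hcont.tendsto.comp hq)).mul
        ((Real.continuous_exp.tendsto _).comp (harctan.const_mul c))
    have heq : (fun y : ℝ => p y * y ^ (2 * (ν + 1))) =ᶠ[atTop]
        (fun y : ℝ => (1 / N) * (q y) ^ (-(ν + 1)) *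
          Real.exp (c * Real.arctan ((E * y + g) / b))) := by
      filter_upwards [eventually_gt_atTop (0:ℝ)] with y hy
      rw [← key y hy.ne']
      congr 1
      rw [Real.rpow_mul hy.le, Real.rpow_two]
    have h1 : c * ((1:ℝ) * (π / 2)) = c * (π / 2) := by ring
    rw [← hlim 1 (Or.inl rfl), h1]
    exact Tendsto.congr' heq.symm hF
  · -- atBot
    have hq : Tendsto q atBot (nhds (E ^ 2)) := by
      have h1 : Tendsto (fun y : ℝ => (E + g * y⁻¹) ^ 2 + (b * y⁻¹) ^ 2) atBot
          (nhds ((E + g * 0) ^ 2 + (b * 0) ^ 2)) := by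
        have hinv : Tendsto (fun y : ℝ => y⁻¹) atBot (nhds 0) := by
          have := (tendsto_neg_atBot_atTop : Tendsto (fun y : ℝ => -y) atBot atTop).inv_tendsto_atTop.neg
          simp only [Pi.inv_apply, inv_neg, neg_neg, neg_zero] at this
          exact this
        exact (((tendsto_const_nhds.add (hinv.const_mul g)).pow 2).add
          ((hinv.const_mul b).pow 2))
      simp only [mul_zero, add_zero, zero_pow, ne_eq, OfNat.ofNat_ne_zero,
        not_false_eq_true] at h1
      refine Tendsto.congr' ?_ h1
      filter_upwards [eventually_lt_atBot (0:ℝ)] with y hy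
      have hy' : y ≠ 0 := hy.ne
      rw [hqdef]
      field_simp
    have harg : Tendsto (fun y : ℝ => (E * y + g) / b) atBot atBot := by
      apply Tendsto.atBot_div_const hb
      exact tendsto_atBot_add_const_right _ g (tendsto_id.const_mul_atBot hE)
    have harctan : Tendsto (fun y : ℝ => Real.arctan ((E * y + g) / b)) atBot
        (nhds (-(π / 2))) :=
      (Real.tendsto_arctan_atBot.mono_right nhdsWithin_le_nhds).comp harg
    have hF : Tendsto (fun y : ℝ => (1 / N) * (q y) ^ (-(ν + 1)) *
        Real.exp (c * Real.arctan ((E * y + g) / b))) atBot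
        (nhds ((1 / N) * (E ^ 2 : ℝ) ^ (-(ν + 1)) * Real.exp (c * (-(π / 2))))) :=
      (tendsto_const_nhds.mul (hcont.tendsto.comp hq)).mul
        ((Real.continuous_exp.tendsto _).comp (harctan.const_mul c))
    have heq : (fun y : ℝ => p y * |y| ^ (2 * (ν + 1))) =ᶠ[atBot]
        (fun y : ℝ => (1 / N) * (q y) ^ (-(ν + 1)) *
          Real.exp (c * Real.arctan ((E * y + g) / b))) := by
      filter_upwards [eventually_lt_atBot (0:ℝ)] with y hy
      rw [← key y hy.ne]
      congr 1
      rw [Real.rpow_mul (abs_nonneg y), Real.rpow_two, sq_abs]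
    have : c * (-(π / 2)) = c * ((-1 : ℝ) * (π / 2)) := by ring
    rw [← hlim (-1) (Or.inr rfl), ← this]
    exact Tendsto.congr' heq.symm hF
end

section
/- If Λ(r) = (εm/θ) + (k − εm/θ) e^{−θr/ε} with θ > 0, ε > 0, then for α > 1 the integral (σ^α/ε) ∫₀ᵗ |Λ(r)|^α dr equals (σ^α/(αθ)) (|k|^α − |Λ(t)|^α) + (ε^{α−1} σ^α/θ^α)|m|^α t + R(ε), where the remainder satisfies R(ε) → 0 as ε → 0⁺ (t, k, m, θ, σ, α fixed, t > 0). -/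
open Real Filter MeasureTheory intervalIntegral Set

lemma myexp_integral {β : ℝ} (hβ : 0 < β) (t : ℝ) :
    ∫ r in (0:ℝ)..t, Real.exp (-β * r) = (1 - Real.exp (-β * t)) / β := by
  have h := intervalIntegral.integral_comp_mul_left (a := (0:ℝ)) (b := t)
    (fun x => Real.exp x) (c := -β) (neg_ne_zero.mpr hβ.ne')
  simp only [mul_zero, integral_exp, Real.exp_zero, smul_eq_mul] at h
  rw [h, div_eq_mul_inv, mul_comm, inv_neg]
  ring

lemma real_rpow_add_le {x y p : ℝ} (hx : 0 ≤ x) (hy : 0 ≤ y) (hp : 0 ≤ p) (hp1 : p ≤ 1) :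
    (x + y) ^ p ≤ x ^ p + y ^ p := by
  lift x to NNReal using hx
  lift y to NNReal using hy
  exact_mod_cast NNReal.rpow_add_le_add_rpow x y hp hp1

lemma rpow_lip {α : ℝ} (hα : 1 ≤ α) {x y M : ℝ} (hx : 0 ≤ x) (hy : 0 ≤ y)
    (hxM : x ≤ M) (hyM : y ≤ M) :
    |x ^ α - y ^ α| ≤ α * M ^ (α - 1) * |x - y| := by
  wlog hyx : y ≤ x generalizing x y
  · rw [abs_sub_comm, abs_sub_comm x y]
    exact this hy hx hyM hxM (le_of_not_ge hyx)
  rcases eq_or_lt_of_le hyx with rfl | hlt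
  · simp
  have hcont : ContinuousOn (fun s : ℝ => s ^ α) (Set.Icc y x) :=
    (Real.continuous_rpow_const (by linarith)).continuousOn
  have hderiv : ∀ s ∈ Set.Ioo y x, HasDerivAt (fun s : ℝ => s ^ α) (α * s ^ (α - 1)) s :=
    fun s _ => Real.hasDerivAt_rpow_const (Or.inr hα)
  obtain ⟨c, hc, hceq⟩ := exists_hasDerivAt_eq_slope (fun s : ℝ => s ^ α) _ hlt hcont hderiv
  have hxy : (0:ℝ) < x - y := sub_pos.mpr hlt
  have h1 : x ^ α - y ^ α = α * c ^ (α - 1) * (x - y) := by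
    field_simp at hceq
    linarith [hceq]
  have hc0 : 0 ≤ c := hy.trans hc.1.le
  have hcM : c ≤ M := hc.2.le.trans hxM
  have h2 : c ^ (α - 1) ≤ M ^ (α - 1) := Real.rpow_le_rpow hc0 hcM (by linarith)
  have hcnn : 0 ≤ c ^ (α - 1) := Real.rpow_nonneg hc0 _
  have hnn : 0 ≤ α * c ^ (α - 1) * (x - y) := by
    apply mul_nonneg (mul_nonneg (by linarith) hcnn) hxy.le
  rw [h1, abs_of_nonneg hnn, abs_of_nonneg hxy.le]
  have h3 : c ^ (α - 1) * (x - y) ≤ M ^ (α - 1) * (x - y) :=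
    mul_le_mul_of_nonneg_right h2 hxy.le
  calc α * c ^ (α - 1) * (x - y) = α * (c ^ (α - 1) * (x - y)) := by ring
    _ ≤ α * (M ^ (α - 1) * (x - y)) := mul_le_mul_of_nonneg_left h3 (by linarith)
    _ = α * M ^ (α - 1) * (x - y) := by ring

lemma key_ineq {α : ℝ} (hα : 1 ≤ α) (u v B : ℝ) (hB : |v| ≤ B) :
    abs (|u + v| ^ α - |u| ^ α) ≤ α * (|u| + B) ^ (α - 1) * B := by
  have hB0 : 0 ≤ B := (abs_nonneg v).trans hB
  have h1 : |u + v| ≤ |u| + B := (abs_add_le u v).trans (by linarith)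
  have h2 := rpow_lip hα (abs_nonneg (u + v)) (abs_nonneg u) h1
    (le_add_of_nonneg_right hB0)
  refine h2.trans ?_
  have h3 : abs (|u + v| - |u|) ≤ B := (abs_abs_sub_abs_le_abs_sub _ _).trans (by simpa using hB)
  have h4 : (0:ℝ) ≤ (|u| + B) ^ (α - 1) := Real.rpow_nonneg (by positivity) _
  calc α * (|u| + B) ^ (α - 1) * abs (|u + v| - |u|)
      = α * (|u| + B) ^ (α - 1) * abs (|u + v| - |u|) := rfl
    _ ≤ α * (|u| + B) ^ (α - 1) * B :=
        mul_le_mul_of_nonneg_left h3 (mul_nonneg (by linarith) h4)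

lemma pointwise_bd (θ ε k m α : ℝ) (hθ : 0 < θ) (hε : 0 < ε) (hα1 : 1 ≤ α) (hα2 : α ≤ 2)
    (r : ℝ) (hr : 0 ≤ r) :
    abs (|ε * m / θ + (k - ε * m / θ) * Real.exp (-θ * r / ε)| ^ α
        - |k| ^ α * Real.exp (-(α * θ / ε) * r))
      ≤ α * (|k| ^ (α - 1) * Real.exp (-((α - 1) * θ / ε) * r) + (ε * |m| / θ) ^ (α - 1))
          * (ε * |m| / θ) := by
  set E := Real.exp (-θ * r / ε) with hEdef
  have hE0 : 0 < E := Real.exp_pos _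
  have hE1 : E ≤ 1 := by
    rw [hEdef, Real.exp_le_one_iff]
    have h1 : 0 ≤ θ * r := by positivity
    rw [neg_mul]
    exact div_nonpos_of_nonpos_of_nonneg (by linarith) hε.le
  set u := k * E with hudef
  set v := ε * m / θ * (1 - E) with hvdef
  have harg : ε * m / θ + (k - ε * m / θ) * E = u + v := by rw [hudef, hvdef]; ring
  set B := ε * |m| / θ with hBdef
  have hB0 : 0 ≤ B := by positivity
  have hv : |v| ≤ B := by
    rw [hvdef, abs_mul, abs_div, abs_mul, abs_of_pos hε, abs_of_pos hθ,
      abs_of_nonneg (by linarith : (0:ℝ) ≤ 1 - E)]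
    calc ε * |m| / θ * (1 - E) ≤ ε * |m| / θ * 1 := by
          apply mul_le_mul_of_nonneg_left (by linarith) (by positivity)
      _ = B := by rw [hBdef]; ring
  have hu : |u| = |k| * E := by rw [hudef, abs_mul, abs_of_pos hE0]
  have hEpow : ∀ s : ℝ, E ^ s = Real.exp (-(s * θ / ε) * r) := by
    intro s
    rw [hEdef, ← Real.exp_mul]
    congr 1
    ring
  have huα : |u| ^ α = |k| ^ α * Real.exp (-(α * θ / ε) * r) := by
    rw [hu, Real.mul_rpow (abs_nonneg k) hE0.le, hEpow]
  have huα1 : |u| ^ (α - 1) = |k| ^ (α - 1) * Real.exp (-((α - 1) * θ / ε) * r) := by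
    rw [hu, Real.mul_rpow (abs_nonneg k) hE0.le, hEpow]
  have hkey := key_ineq hα1 u v B hv
  have hsub : (|u| + B) ^ (α - 1) ≤ |u| ^ (α - 1) + B ^ (α - 1) :=
    real_rpow_add_le (abs_nonneg u) hB0 (by linarith) (by linarith)
  calc abs (|ε * m / θ + (k - ε * m / θ) * E| ^ α - |k| ^ α * Real.exp (-(α * θ / ε) * r))
      = abs (|u + v| ^ α - |u| ^ α) := by rw [harg, huα]
    _ ≤ α * (|u| + B) ^ (α - 1) * B := hkey
    _ ≤ α * (|u| ^ (α - 1) + B ^ (α - 1)) * B := by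
        apply mul_le_mul_of_nonneg_right (mul_le_mul_of_nonneg_left hsub (by linarith)) hB0
    _ = α * (|k| ^ (α - 1) * Real.exp (-((α - 1) * θ / ε) * r) + B ^ (α - 1)) * B := by
        rw [huα1]

lemma exp_neg_le_inv {x : ℝ} (hx : 0 < x) : Real.exp (-x) ≤ 1 / x := by
  rw [Real.exp_neg, one_div]
  exact inv_anti₀ hx (by linarith [Real.add_one_le_exp x])

set_option maxHeartbeats 1000000 in
theorem stmt_10 (θ σ α t k m : ℝ) (hθ : 0 < θ) (hσ : 0 < σ)
    (hα : α ∈ Set.Ioo (1 : ℝ) 2) (ht : 0 < t) :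
    Tendsto (fun ε : ℝ =>
        (σ ^ α / ε) * (∫ r in (0:ℝ)..t, |ε * m / θ + (k - ε * m / θ) * Real.exp (-θ * r / ε)| ^ α)
          - ((σ ^ α / (α * θ)) * |k| ^ α + (ε ^ (α - 1) * σ ^ α / θ ^ α) * |m| ^ α * t))
      (nhdsWithin 0 (Set.Ioi 0)) (nhds 0) := by
  obtain ⟨hα1, hα2⟩ := hα
  have hα0 : (0:ℝ) < α := by linarith
  set C1 : ℝ := σ ^ α * α * |m| * |k| ^ (α - 1) / ((α - 1) * θ ^ 2)
      + σ ^ α * |k| ^ α / (α * θ) * (1 / (α * θ * t)) with hC1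
  set C2 : ℝ := σ ^ α * α * (|m| / θ) * (|m| / θ) ^ (α - 1) * t
      + σ ^ α / θ ^ α * |m| ^ α * t with hC2
  apply squeeze_zero_norm' (a := fun ε => C1 * ε + C2 * ε ^ (α - 1))
  · -- eventual bound
    filter_upwards [eventually_mem_nhdsWithin] with ε hεmem
    have hε : (0:ℝ) < ε := hεmem
    set B := ε * |m| / θ with hB
    have hB0 : 0 ≤ B := by positivity
    set γ1 := α * θ / ε with hγ1
    set γ2 := (α - 1) * θ / ε with hγ2
    have hγ1p : 0 < γ1 := by rw [hγ1]; positivity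
    have hγ2p : 0 < γ2 := by
      rw [hγ2]; exact div_pos (mul_pos (by linarith) hθ) hε
    set f : ℝ → ℝ := fun r => |ε * m / θ + (k - ε * m / θ) * Real.exp (-θ * r / ε)| ^ α with hf
    set g : ℝ → ℝ := fun r => |k| ^ α * Real.exp (-γ1 * r) with hg
    set h : ℝ → ℝ := fun r => α * (|k| ^ (α - 1) * Real.exp (-γ2 * r) + B ^ (α - 1)) * B with hh
    have hcf : Continuous f := by
      apply (Real.continuous_rpow_const hα0.le).comp
      apply continuous_abs.comp
      fun_prop
    have hcg : Continuous g := by rw [hg]; fun_prop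
    have hch : Continuous h := by rw [hh]; fun_prop
    have hif := hcf.intervalIntegrable (μ := volume) 0 t
    have hig := hcg.intervalIntegrable (μ := volume) 0 t
    have hih := hch.intervalIntegrable (μ := volume) 0 t
    set J := ∫ r in (0:ℝ)..t, f r with hJ
    set G := ∫ r in (0:ℝ)..t, g r with hG
    -- |J - G| ≤ ∫ h
    have hdiff : |J - G| ≤ ∫ r in (0:ℝ)..t, h r := by
      rw [hJ, hG, ← intervalIntegral.integral_sub hif hig]
      have h1 : |∫ r in (0:ℝ)..t, (f r - g r)| ≤ ∫ r in (0:ℝ)..t, |f r - g r| := by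
        simpa [Real.norm_eq_abs] using
          intervalIntegral.norm_integral_le_integral_norm
            (f := fun r => f r - g r) (μ := volume) ht.le
      refine h1.trans (intervalIntegral.integral_mono_on ht.le ((hif.sub hig).abs) hih ?_)
      intro r hr
      exact pointwise_bd θ ε k m α hθ hε hα1.le hα2.le r hr.1
    -- value of ∫ g
    have hIg : G = |k| ^ α * ((1 - Real.exp (-γ1 * t)) / γ1) := by
      rw [hG, hg]
      rw [intervalIntegral.integral_const_mul, myexp_integral hγ1p]
    -- value of ∫ h
    have hIh : (∫ r in (0:ℝ)..t, h r)
        = α * B * |k| ^ (α - 1) * ((1 - Real.exp (-γ2 * t)) / γ2) + α * B * B ^ (α - 1) * t := by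
      have heq : ∀ r, h r = (α * B * |k| ^ (α - 1)) * Real.exp (-γ2 * r)
          + α * B * B ^ (α - 1) := fun r => by rw [hh]; ring
      rw [intervalIntegral.integral_congr (g := fun r => (α * B * |k| ^ (α - 1)) * Real.exp (-γ2 * r) + α * B * B ^ (α - 1)) (fun r _ => heq r)]
      rw [intervalIntegral.integral_add
        ((by fun_prop : Continuous fun r : ℝ => (α * B * |k| ^ (α - 1)) * Real.exp (-γ2 * r)).intervalIntegrable 0 t)
        intervalIntegrable_const]
      rw [intervalIntegral.integral_const_mul, myexp_integral hγ2p,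
        intervalIntegral.integral_const]
      simp [smul_eq_mul]
      ring
    have hIh_le : (∫ r in (0:ℝ)..t, h r)
        ≤ α * B * |k| ^ (α - 1) * (1 / γ2) + α * B * B ^ (α - 1) * t := by
      rw [hIh]
      have hnn : 0 ≤ α * B * |k| ^ (α - 1) :=
        mul_nonneg (mul_nonneg hα0.le hB0) (Real.rpow_nonneg (abs_nonneg k) _)
      have h2 : (1 - Real.exp (-γ2 * t)) / γ2 ≤ 1 / γ2 :=
        (div_le_div_iff_of_pos_right hγ2p).mpr (by linarith [Real.exp_pos (-γ2 * t)])
      have := mul_le_mul_of_nonneg_left h2 hnn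
      linarith
    have hT2 : σ ^ α / ε * G - σ ^ α / (α * θ) * |k| ^ α
        = -(σ ^ α * |k| ^ α / (α * θ) * Real.exp (-γ1 * t)) := by
      rw [hIg, hγ1]
      field_simp
      ring
    have hEt : Real.exp (-γ1 * t) ≤ 1 / (γ1 * t) := by
      rw [show -γ1 * t = -(γ1 * t) from by ring]
      exact exp_neg_le_inv (mul_pos hγ1p ht)
    have hpos2 : (0:ℝ) ≤ σ ^ α * |k| ^ α / (α * θ) :=
      div_nonneg (mul_nonneg (Real.rpow_nonneg hσ.le _) (Real.rpow_nonneg (abs_nonneg k) _))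
        (mul_pos hα0 hθ).le
    have hb1 : |σ ^ α / ε * (J - G)|
        ≤ σ ^ α / ε * (α * B * |k| ^ (α - 1) * (1 / γ2) + α * B * B ^ (α - 1) * t) := by
      rw [abs_mul, abs_of_nonneg (by positivity : (0:ℝ) ≤ σ ^ α / ε)]
      exact mul_le_mul_of_nonneg_left (hdiff.trans hIh_le) (by positivity)
    have hb2 : |σ ^ α / ε * G - σ ^ α / (α * θ) * |k| ^ α|
        ≤ σ ^ α * |k| ^ α / (α * θ) * (1 / (γ1 * t)) := by
      rw [hT2, abs_neg, abs_mul, abs_of_nonneg hpos2,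
        abs_of_nonneg (Real.exp_pos _).le]
      exact mul_le_mul_of_nonneg_left hEt hpos2
    have hb3 : |ε ^ (α - 1) * σ ^ α / θ ^ α * |m| ^ α * t|
        = ε ^ (α - 1) * σ ^ α / θ ^ α * |m| ^ α * t := abs_of_nonneg (by positivity)
    have hBpow : B ^ (α - 1) = ε ^ (α - 1) * (|m| / θ) ^ (α - 1) := by
      rw [hB, show ε * |m| / θ = ε * (|m| / θ) from by ring,
        Real.mul_rpow hε.le (by positivity)]
    rw [Real.norm_eq_abs]
    have hnum : σ ^ α / ε * J
          - (σ ^ α / (α * θ) * |k| ^ α + ε ^ (α - 1) * σ ^ α / θ ^ α * |m| ^ α * t)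
        = σ ^ α / ε * (J - G) + (σ ^ α / ε * G - σ ^ α / (α * θ) * |k| ^ α)
          + -(ε ^ (α - 1) * σ ^ α / θ ^ α * |m| ^ α * t) := by ring
    rw [hnum]
    calc |σ ^ α / ε * (J - G) + (σ ^ α / ε * G - σ ^ α / (α * θ) * |k| ^ α)
            + -(ε ^ (α - 1) * σ ^ α / θ ^ α * |m| ^ α * t)|
        ≤ |σ ^ α / ε * (J - G)| + |σ ^ α / ε * G - σ ^ α / (α * θ) * |k| ^ α|
            + |ε ^ (α - 1) * σ ^ α / θ ^ α * |m| ^ α * t| := by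
          have h1 := abs_add_le (σ ^ α / ε * (J - G) + (σ ^ α / ε * G - σ ^ α / (α * θ) * |k| ^ α))
            (-(ε ^ (α - 1) * σ ^ α / θ ^ α * |m| ^ α * t))
          have h2 := abs_add_le (σ ^ α / ε * (J - G)) (σ ^ α / ε * G - σ ^ α / (α * θ) * |k| ^ α)
          rw [abs_neg] at h1
          linarith
      _ ≤ σ ^ α / ε * (α * B * |k| ^ (α - 1) * (1 / γ2) + α * B * B ^ (α - 1) * t)
            + σ ^ α * |k| ^ α / (α * θ) * (1 / (γ1 * t))
            + ε ^ (α - 1) * σ ^ α / θ ^ α * |m| ^ α * t := by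
          rw [hb3] at *
          linarith [hb1, hb2, le_of_eq hb3]
      _ = C1 * ε + C2 * ε ^ (α - 1) := by
          rw [hBpow, hC1, hC2, hγ1, hγ2, hB]
          have hα1' : α - 1 ≠ 0 := ne_of_gt (by linarith)
          field_simp
          ring
  · -- tendsto of the bound
    have t1 : Tendsto (fun ε : ℝ => ε ^ (α - 1)) (nhdsWithin 0 (Set.Ioi 0)) (nhds 0) := by
      have hc := (Real.continuous_rpow_const (by linarith : (0:ℝ) ≤ α - 1)).tendsto 0
      rw [Real.zero_rpow (ne_of_gt (by linarith : (0:ℝ) < α - 1))] at hc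
      exact hc.mono_left nhdsWithin_le_nhds
    have t2 : Tendsto (fun ε : ℝ => ε) (nhdsWithin 0 (Set.Ioi 0)) (nhds 0) :=
      tendsto_id.mono_left nhdsWithin_le_nhds
    have := (t2.const_mul C1).add (t1.const_mul C2)
    simpa using this
end

section
/- For a > 0 and 1 < α < 2, ∫_a^∞ (e^{iky} − 1 − iky) y^{−(1+α)} dy = |k|^α Γ(−α) e^{−i sgn(k) πα/2} − ∑_{n≥2} (ik)^n a^{n−α} / ((n−α) Γ(n+1)), for all k ∈ ℝ. -/
/-!
Put `J(s) = ∫₀^∞ (e^{-sy} - 1 + sy) y^{-1-α} dy` for `Re s ≥ 0`; the integral over `(a, ∞)` in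
the theorem is `J(-ik)` minus the integral over `(0, a]`.

The substitution `y ↦ ty` gives `J(t) = t^α J(1)` for `t > 0`. Differentiating twice under the
integral sign, `J''(1) = ∫₀^∞ e^{-y} y^{1-α} dy = Γ(2 - α)`, while the scaling law gives
`J''(1) = α(α - 1) J(1)`; hence `J(1) = Γ(-α)` and `J(σ) = Γ(-α) σ^α` for `σ > 0`. Both sides are
holomorphic on `Re s > 0` and continuous up to the imaginary axis, so `J(s) = Γ(-α) s^α` for all
`Re s ≥ 0`, and `(-ik)^α = |k|^α e^{-i sgn(k) πα/2}`. On `(0, a]` the exponential series of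
`e^{iky} - 1 - iky` is integrated termwise.
-/

open Real MeasureTheory Set Filter Topology Complex

noncomputable section

def levyKernel (α : ℝ) (s : ℂ) (y : ℝ) : ℂ :=
  (cexp (-(s * y)) - 1 + s * y) * ((y ^ (-1 - α) : ℝ) : ℂ)

def levyIntegral (α : ℝ) (s : ℂ) : ℂ := ∫ y in Ioi 0, levyKernel α s y

def levyKernel' (α : ℝ) (s : ℂ) (y : ℝ) : ℂ :=
  (1 - cexp (-(s * y))) * ((y ^ (-α) : ℝ) : ℂ)

def levyKernel'' (α : ℝ) (s : ℂ) (y : ℝ) : ℂ :=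
  cexp (-(s * y)) * ((y ^ (1 - α) : ℝ) : ℂ)

def levyEnvelope (α y : ℝ) : ℝ := if y ≤ 1 then y ^ (1 - α) else y ^ (-α)

end

lemma integral_Ioc_rpow {a r : ℝ} (ha : 0 ≤ a) (hr : -1 < r) :
    ∫ y in Ioc 0 a, y ^ r = a ^ (r + 1) / (r + 1) := by
  rw [← intervalIntegral.integral_of_le ha, integral_rpow (Or.inl hr),
    zero_rpow (by linarith), sub_zero]

lemma integrableOn_Ioc_rpow {a r : ℝ} (ha : 0 ≤ a) (hr : -1 < r) :
    IntegrableOn (fun y => y ^ r) (Ioc 0 a) :=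
  (intervalIntegrable_iff_integrableOn_Ioc_of_le ha).1
    (intervalIntegral.intervalIntegrable_rpow' hr)

lemma integrableOn_levyEnvelope {α : ℝ} (hα : α ∈ Ioo 1 2) :
    IntegrableOn (levyEnvelope α) (Ioi 0) := by
  rw [← Ioc_union_Ioi_eq_Ioi zero_le_one]
  refine IntegrableOn.union ?_ ?_
  · exact (integrableOn_Ioc_rpow (r := 1 - α) zero_le_one (by linarith [hα.2])).congr_fun
      (fun y hy => by simp [levyEnvelope, hy.2]) measurableSet_Ioc
  · exact (integrableOn_Ioi_rpow_of_lt (a := -α) (by linarith [hα.1]) zero_lt_one).congr_fun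
      (fun y hy => by simp [levyEnvelope, not_le.2 (mem_Ioi.1 hy)]) measurableSet_Ioi

lemma norm_exp_neg_le_one {z : ℂ} (hz : 0 ≤ z.re) : ‖cexp (-z)‖ ≤ 1 := by
  rw [Complex.norm_exp, Real.exp_le_one_iff, neg_re]
  exact neg_nonpos.2 hz

lemma norm_one_sub_exp_neg_le {z : ℂ} (hz : 0 ≤ z.re) : ‖1 - cexp (-z)‖ ≤ ‖z‖ := by
  have hderiv (w : ℂ) (_ : w ∈ {w : ℂ | 0 ≤ w.re}) :
      HasDerivWithinAt (fun w => 1 - cexp (-w)) (cexp (-w)) {w | 0 ≤ w.re} w := by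
    simpa using ((hasDerivAt_neg w).cexp.const_sub 1).hasDerivWithinAt
  simpa using (convex_halfSpace_re_ge 0).norm_image_sub_le_of_norm_hasDerivWithin_le hderiv
    (fun w hw => norm_exp_neg_le_one hw) (x := 0) (y := z) (by simp) hz

lemma norm_exp_neg_sub_one_add_le {z : ℂ} (hz : 0 ≤ z.re) :
    ‖cexp (-z) - 1 + z‖ ≤ ‖z‖ ^ 2 := by
  set S := {w : ℂ | 0 ≤ w.re} ∩ Metric.closedBall 0 ‖z‖
  have hconvex : Convex ℝ S := (convex_halfSpace_re_ge 0).inter (convex_closedBall 0 ‖z‖)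
  have hderiv (w : ℂ) (_ : w ∈ S) :
      HasDerivWithinAt (fun w => cexp (-w) - 1 + w) (1 - cexp (-w)) S w :=
    (((hasDerivAt_neg w).cexp.sub_const 1).add (hasDerivAt_id w)).hasDerivWithinAt.congr_deriv
      (by ring)
  have hbound (w : ℂ) (hw : w ∈ S) : ‖1 - cexp (-w)‖ ≤ ‖z‖ :=
    (norm_one_sub_exp_neg_le hw.1).trans (by simpa using hw.2)
  simpa [sq] using hconvex.norm_image_sub_le_of_norm_hasDerivWithin_le hderiv hbound (x := 0)
    ⟨by simp, by simp⟩ ⟨hz, by simp⟩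

lemma re_mul_ofReal_nonneg {s : ℂ} (hs : 0 ≤ s.re) {y : ℝ} (hy : 0 ≤ y) : 0 ≤ (s * y).re := by
  simpa using mul_nonneg hs hy

lemma norm_levyKernel_le {α M : ℝ} {s : ℂ} (hs : 0 ≤ s.re) (hM : ‖s‖ ≤ M) {y : ℝ}
    (hy : 0 < y) : ‖levyKernel α s y‖ ≤ (2 + M) ^ 2 * levyEnvelope α y := by
  have hsy := re_mul_ofReal_nonneg hs hy.le
  have hnorm : ‖s * y‖ ≤ M * y := by
    rw [norm_mul, norm_real, norm_of_nonneg hy.le]; gcongr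
  have hM0 : 0 ≤ M := (norm_nonneg s).trans hM
  rw [levyKernel, norm_mul, norm_real, norm_of_nonneg (rpow_nonneg hy.le _), levyEnvelope]
  split_ifs with hy1
  · calc ‖cexp (-(s * y)) - 1 + s * y‖ * y ^ (-1 - α)
        ≤ (2 + M) ^ 2 * y ^ 2 * y ^ (-1 - α) := by
          gcongr
          refine (norm_exp_neg_sub_one_add_le hsy).trans ?_
          rw [← mul_pow]; gcongr; linarith
      _ = (2 + M) ^ 2 * y ^ (1 - α) := by
          rw [mul_assoc, ← rpow_natCast y 2, ← rpow_add hy]; ring_nf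
  · have hsmall : ‖cexp (-(s * y)) - 1 + s * y‖ ≤ (2 + M) ^ 2 * y := by
      calc ‖cexp (-(s * y)) - 1 + s * y‖ ≤ ‖cexp (-(s * y))‖ + ‖(1 : ℂ)‖ + ‖s * y‖ :=
            (norm_add_le _ _).trans (by gcongr; exact norm_sub_le _ _)
        _ ≤ 2 + M * y := by linarith [norm_exp_neg_le_one hsy, norm_one (α := ℂ)]
        _ ≤ (2 + M) * y := by nlinarith
        _ ≤ (2 + M) ^ 2 * y := by gcongr; nlinarith
    calc ‖cexp (-(s * y)) - 1 + s * y‖ * y ^ (-1 - α) ≤ (2 + M) ^ 2 * y * y ^ (-1 - α) := by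
          gcongr
      _ = (2 + M) ^ 2 * y ^ (-α) := by
          rw [mul_assoc, mul_comm y, ← rpow_add_one hy.ne']; ring_nf

lemma norm_levyKernel'_le {α M : ℝ} {s : ℂ} (hs : 0 ≤ s.re) (hM : ‖s‖ ≤ M) {y : ℝ}
    (hy : 0 < y) : ‖levyKernel' α s y‖ ≤ (2 + M) * levyEnvelope α y := by
  have hsy := re_mul_ofReal_nonneg hs hy.le
  have hM0 : 0 ≤ M := (norm_nonneg s).trans hM
  rw [levyKernel', norm_mul, norm_real, norm_of_nonneg (rpow_nonneg hy.le _), levyEnvelope]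
  split_ifs with hy1
  · calc ‖1 - cexp (-(s * y))‖ * y ^ (-α) ≤ (2 + M) * y * y ^ (-α) := by
          gcongr
          refine (norm_one_sub_exp_neg_le hsy).trans ?_
          rw [norm_mul, norm_real, norm_of_nonneg hy.le]
          gcongr
          linarith
      _ = (2 + M) * y ^ (1 - α) := by
          rw [mul_assoc, mul_comm y, ← rpow_add_one hy.ne']; ring_nf
  · gcongr
    calc ‖1 - cexp (-(s * y))‖ ≤ ‖(1 : ℂ)‖ + ‖cexp (-(s * y))‖ := norm_sub_le _ _
      _ ≤ 2 + M := by linarith [norm_exp_neg_le_one hsy, norm_one (α := ℂ)]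

lemma norm_levyKernel''_le {α σ : ℝ} {s : ℂ} (hs : σ ≤ s.re) {y : ℝ} (hy : 0 < y) :
    ‖levyKernel'' α s y‖ ≤ Real.exp (-σ * y) * y ^ (1 - α) := by
  rw [levyKernel'', norm_mul, norm_real, norm_of_nonneg (rpow_nonneg hy.le _), Complex.norm_exp]
  gcongr
  simpa using mul_le_mul_of_nonneg_right hs hy.le

lemma measurable_levyKernel (α : ℝ) (s : ℂ) : Measurable (levyKernel α s) := by
  unfold levyKernel; fun_prop

lemma measurable_levyKernel' (α : ℝ) (s : ℂ) : Measurable (levyKernel' α s) := by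
  unfold levyKernel'; fun_prop

lemma measurable_levyKernel'' (α : ℝ) (s : ℂ) : Measurable (levyKernel'' α s) := by
  unfold levyKernel''; fun_prop

lemma integrableOn_levyKernel {α : ℝ} (hα : α ∈ Ioo 1 2) {s : ℂ} (hs : 0 ≤ s.re) :
    IntegrableOn (levyKernel α s) (Ioi 0) :=
  ((integrableOn_levyEnvelope hα).const_mul _).mono'
    (measurable_levyKernel α s).aestronglyMeasurable
    (ae_restrict_of_forall_mem measurableSet_Ioi fun _ hy => norm_levyKernel_le hs le_rfl hy)

lemma integrableOn_levyKernel' {α : ℝ} (hα : α ∈ Ioo 1 2) {s : ℂ} (hs : 0 ≤ s.re) :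
    IntegrableOn (levyKernel' α s) (Ioi 0) :=
  ((integrableOn_levyEnvelope hα).const_mul _).mono'
    (measurable_levyKernel' α s).aestronglyMeasurable
    (ae_restrict_of_forall_mem measurableSet_Ioi fun _ hy => norm_levyKernel'_le hs le_rfl hy)

lemma hasDerivAt_levyKernel (α : ℝ) (s : ℂ) {y : ℝ} (hy : 0 < y) :
    HasDerivAt (fun s => levyKernel α s y) (levyKernel' α s y) s := by
  have hexp : HasDerivAt (fun s : ℂ => cexp (-(s * y))) (cexp (-(s * y)) * -y) s := by
    simpa using ((hasDerivAt_mul_const (y : ℂ)).neg).cexp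
  have hrpow : ((y ^ (-α) : ℝ) : ℂ) = y * ((y ^ (-1 - α) : ℝ) : ℂ) := by
    rw [← ofReal_mul, mul_comm, ← rpow_add_one hy.ne']; ring_nf
  refine (((hexp.sub_const 1).add (hasDerivAt_mul_const (y : ℂ))).mul_const _).congr_deriv ?_
  rw [levyKernel', hrpow]
  ring

lemma hasDerivAt_levyKernel' (α : ℝ) (s : ℂ) {y : ℝ} (hy : 0 < y) :
    HasDerivAt (fun s => levyKernel' α s y) (levyKernel'' α s y) s := by
  have hexp : HasDerivAt (fun s : ℂ => cexp (-(s * y))) (cexp (-(s * y)) * -y) s := by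
    simpa using ((hasDerivAt_mul_const (y : ℂ)).neg).cexp
  have hrpow : ((y ^ (1 - α) : ℝ) : ℂ) = y * ((y ^ (-α) : ℝ) : ℂ) := by
    rw [← ofReal_mul, mul_comm, ← rpow_add_one hy.ne']; ring_nf
  refine ((hexp.const_sub 1).mul_const _).congr_deriv ?_
  rw [levyKernel'', hrpow]
  ring

lemma half_re_lt_re_of_mem_ball {s₀ s : ℂ} (hs : s ∈ Metric.ball s₀ (s₀.re / 2)) :
    s₀.re / 2 < s.re := by
  have h := (abs_le.1 (abs_re_le_norm (s - s₀))).1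
  rw [Metric.mem_ball, dist_eq_norm] at hs
  rw [sub_re] at h
  linarith

lemma hasDerivAt_levyIntegral {α : ℝ} (hα : α ∈ Ioo 1 2) {s₀ : ℂ} (hs₀ : 0 < s₀.re) :
    HasDerivAt (levyIntegral α) (∫ y in Ioi 0, levyKernel' α s₀ y) s₀ :=
  (hasDerivAt_integral_of_dominated_loc_of_deriv_le (Metric.ball_mem_nhds s₀ (half_pos hs₀))
    (.of_forall fun s => (measurable_levyKernel α s).aestronglyMeasurable)
    (integrableOn_levyKernel hα hs₀.le) (measurable_levyKernel' α s₀).aestronglyMeasurable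
    (ae_restrict_of_forall_mem measurableSet_Ioi fun _ hy _ hs =>
      norm_levyKernel'_le ((half_pos hs₀).trans (half_re_lt_re_of_mem_ball hs)).le
        (norm_le_of_mem_closedBall (Metric.ball_subset_closedBall hs)) hy)
    ((integrableOn_levyEnvelope hα).const_mul _)
    (ae_restrict_of_forall_mem measurableSet_Ioi fun _ hy s _ =>
      hasDerivAt_levyKernel α s hy)).2

lemma hasDerivAt_integral_levyKernel' {α : ℝ} (hα : α ∈ Ioo 1 2) {s₀ : ℂ} (hs₀ : 0 < s₀.re) :
    HasDerivAt (fun s => ∫ y in Ioi 0, levyKernel' α s y)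
      (∫ y in Ioi 0, levyKernel'' α s₀ y) s₀ :=
  (hasDerivAt_integral_of_dominated_loc_of_deriv_le (Metric.ball_mem_nhds s₀ (half_pos hs₀))
    (.of_forall fun s => (measurable_levyKernel' α s).aestronglyMeasurable)
    (integrableOn_levyKernel' hα hs₀.le) (measurable_levyKernel'' α s₀).aestronglyMeasurable
    (ae_restrict_of_forall_mem measurableSet_Ioi fun _ hy _ hs =>
      norm_levyKernel''_le (half_re_lt_re_of_mem_ball hs).le hy)
    ((integrableOn_rpow_mul_exp_neg_mul_rpow (s := 1 - α) (by linarith [hα.2]) one_pos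
      (half_pos hs₀)).congr_fun (fun y _ => by simp only [rpow_one]; ring) measurableSet_Ioi)
    (ae_restrict_of_forall_mem measurableSet_Ioi fun _ hy s _ =>
      hasDerivAt_levyKernel' α s hy)).2

lemma continuousOn_levyIntegral {α : ℝ} (hα : α ∈ Ioo 1 2) :
    ContinuousOn (levyIntegral α) {s | 0 ≤ s.re} := by
  intro s₀ _
  refine continuousWithinAt_of_dominated
    (.of_forall fun s => (measurable_levyKernel α s).aestronglyMeasurable) ?_
    ((integrableOn_levyEnvelope hα).const_mul ((2 + (‖s₀‖ + 1)) ^ 2))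
    (ae_restrict_of_forall_mem measurableSet_Ioi fun _ hy =>
      (hasDerivAt_levyKernel α s₀ hy).continuousAt.continuousWithinAt)
  filter_upwards [self_mem_nhdsWithin,
    mem_nhdsWithin_of_mem_nhds (Metric.closedBall_mem_nhds s₀ one_pos)] with s hs hs'
  exact ae_restrict_of_forall_mem measurableSet_Ioi fun _ hy =>
    norm_levyKernel_le hs (norm_le_of_mem_closedBall hs') hy

lemma levyKernel_ofReal_mul {α : ℝ} (s : ℂ) {t y : ℝ} (ht : 0 < t) (hy : 0 < y) :
    levyKernel α (t * s) y = ((t ^ (1 + α) : ℝ) : ℂ) * levyKernel α s (t * y) := by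
  have hrpow : ((t ^ (1 + α) : ℝ) : ℂ) * (((t * y) ^ (-1 - α) : ℝ) : ℂ)
      = ((y ^ (-1 - α) : ℝ) : ℂ) := by
    rw [mul_rpow ht.le hy.le, ← ofReal_mul, ← mul_assoc, ← rpow_add ht]
    norm_num
  rw [levyKernel, levyKernel, ← hrpow]
  push_cast
  ring_nf

lemma levyIntegral_ofReal_mul {α : ℝ} (s : ℂ) {t : ℝ} (ht : 0 < t) :
    levyIntegral α (t * s) = ((t ^ α : ℝ) : ℂ) * levyIntegral α s := by
  have hsubst := integral_comp_mul_left_Ioi (levyKernel α s) 0 ht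
  rw [mul_zero] at hsubst
  rw [levyIntegral, setIntegral_congr_fun measurableSet_Ioi fun y hy =>
    levyKernel_ofReal_mul s ht hy, integral_const_mul, hsubst, levyIntegral, real_smul,
    ← mul_assoc, ← ofReal_mul, ← rpow_neg_one, ← rpow_add ht]
  ring_nf

lemma HasDerivAt.unique_of_eventually_eq_ofReal {F : ℂ → ℂ} {G : ℝ → ℂ} {F' G' : ℂ} {σ : ℝ}
    (hF : HasDerivAt F F' σ) (hG : HasDerivAt G G' σ) (hFG : ∀ᶠ τ : ℝ in 𝓝 σ, F τ = G τ) :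
    F' = G' :=
  hF.comp_ofReal.unique (hG.congr_of_eventuallyEq hFG)

lemma integral_levyKernel''_one {α : ℝ} (hα : α < 2) :
    ∫ y in Ioi 0, levyKernel'' α 1 y = Real.Gamma (2 - α) := by
  rw [Real.Gamma_eq_integral (by linarith), ← integral_complex_ofReal]
  refine setIntegral_congr_fun measurableSet_Ioi fun y _ => ?_
  rw [levyKernel'', one_mul, show 2 - α - 1 = 1 - α by ring]
  push_cast
  ring

lemma Gamma_two_sub_eq {α : ℝ} (h₀ : α ≠ 0) (h₁ : α ≠ 1) :
    Real.Gamma (2 - α) = α * (α - 1) * Real.Gamma (-α) := by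
  rw [show 2 - α = 1 - α + 1 by ring, Real.Gamma_add_one (sub_ne_zero.2 h₁.symm),
    show 1 - α = -α + 1 by ring, Real.Gamma_add_one (neg_ne_zero.2 h₀)]
  ring

lemma levyIntegral_one {α : ℝ} (hα : α ∈ Ioo 1 2) : levyIntegral α 1 = Real.Gamma (-α) := by
  set c := levyIntegral α 1
  have hscale (σ : ℝ) (hσ : 0 < σ) : levyIntegral α σ = ((σ ^ α : ℝ) : ℂ) * c := by
    simpa using levyIntegral_ofReal_mul 1 hσ
  have hderiv (σ : ℝ) (hσ : 0 < σ) :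
      ∫ y in Ioi 0, levyKernel' α σ y = ((α * σ ^ (α - 1) : ℝ) : ℂ) * c :=
    (hasDerivAt_levyIntegral hα (by simpa using hσ)).unique_of_eventually_eq_ofReal
      ((hasDerivAt_rpow_const (Or.inl hσ.ne')).ofReal_comp.mul_const c)
      ((eventually_gt_nhds hσ).mono hscale)
  have hderiv2 : Real.Gamma (2 - α) = ((α * ((α - 1) * 1 ^ (α - 1 - 1)) : ℝ) : ℂ) * c := by
    rw [← integral_levyKernel''_one hα.2]
    exact (hasDerivAt_integral_levyKernel' hα (by simp)).unique_of_eventually_eq_ofReal (σ := 1)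
      (((hasDerivAt_rpow_const (Or.inl one_ne_zero)).const_mul α).ofReal_comp.mul_const c)
      ((eventually_gt_nhds one_pos).mono hderiv)
  rw [Gamma_two_sub_eq (one_pos.trans hα.1).ne' hα.1.ne', one_rpow, mul_one] at hderiv2
  have hα0 : ((α * (α - 1) : ℝ) : ℂ) ≠ 0 := by
    norm_cast; nlinarith [hα.1]
  apply mul_left_cancel₀ hα0
  push_cast at hderiv2 ⊢
  linear_combination -hderiv2

lemma levyIntegral_ofReal {α : ℝ} (hα : α ∈ Ioo 1 2) {σ : ℝ} (hσ : 0 < σ) :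
    levyIntegral α σ = Real.Gamma (-α) * (σ : ℂ) ^ (α : ℂ) := by
  simpa [levyIntegral_one hα, ofReal_cpow hσ.le, mul_comm] using
    levyIntegral_ofReal_mul (α := α) 1 hσ

lemma levyIntegral_eq_of_re_pos {α : ℝ} (hα : α ∈ Ioo 1 2) {s : ℂ} (hs : 0 < s.re) :
    levyIntegral α s = Real.Gamma (-α) * s ^ (α : ℂ) := by
  have hopen : IsOpen {s : ℂ | 0 < s.re} := isOpen_lt continuous_const continuous_re
  have hJ : AnalyticOnNhd ℂ (levyIntegral α) {s | 0 < s.re} :=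
    DifferentiableOn.analyticOnNhd (fun s hs =>
      (hasDerivAt_levyIntegral hα hs).differentiableAt.differentiableWithinAt) hopen
  have hpow : AnalyticOnNhd ℂ (fun s : ℂ => Real.Gamma (-α) * s ^ (α : ℂ)) {s | 0 < s.re} :=
    DifferentiableOn.analyticOnNhd (fun s hs => ((differentiableAt_id.cpow_const
      (mem_slitPlane_iff.2 (Or.inl hs))).const_mul _).differentiableWithinAt) hopen
  have hreal :
      (1 : ℂ) ∈ closure ({s | levyIntegral α s = Real.Gamma (-α) * s ^ (α : ℂ)} \ {1}) := by
    refine mem_closure_of_tendsto (b := 𝓝[>] (1 : ℝ)) (f := ofReal)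
      (by simpa using (continuous_ofReal.tendsto 1).mono_left nhdsWithin_le_nhds) ?_
    filter_upwards [self_mem_nhdsWithin] with σ hσ
    exact ⟨levyIntegral_ofReal hα (one_pos.trans hσ), by simpa using (mem_Ioi.1 hσ).ne'⟩
  exact hJ.eqOn_of_preconnected_of_mem_closure hpow (convex_halfSpace_re_gt 0).isPreconnected
    (by simp) hreal hs

lemma levyIntegral_eq {α : ℝ} (hα : α ∈ Ioo 1 2) {s : ℂ} (hs : 0 ≤ s.re) :
    levyIntegral α s = Real.Gamma (-α) * s ^ (α : ℂ) := by
  have hpow : ContinuousOn (fun s : ℂ => Real.Gamma (-α) * s ^ (α : ℂ)) {s | 0 ≤ s.re} :=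
    fun s hs => ((continuousAt_cpow_const_of_re_pos (Or.inl hs)
      (by simpa using by linarith [hα.1])).const_mul _).continuousWithinAt
  exact Set.EqOn.of_subset_closure (s := {s : ℂ | 0 < s.re}) (t := {s : ℂ | 0 ≤ s.re})
    (fun s hs => levyIntegral_eq_of_re_pos hα hs) (continuousOn_levyIntegral hα) hpow
    (fun s hs => le_of_lt (α := ℝ) hs) (by simp) hs

lemma arg_neg_I_mul_ofReal (k : ℝ) : arg (-I * k) = -Real.sign k * (π / 2) := by
  rcases lt_trichotomy k 0 with hk | rfl | hk
  · rw [show -I * k = ((-k : ℝ) : ℂ) * I by push_cast; ring, arg_real_mul _ (by linarith), arg_I,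
      Real.sign_of_neg hk]
    ring
  · simp
  · rw [show -I * k = (k : ℂ) * (-I) by ring, arg_real_mul _ hk, arg_neg_I, Real.sign_of_pos hk]
    ring

lemma neg_I_mul_ofReal_cpow (α k : ℝ) :
    (-I * k) ^ (α : ℂ) = ((|k| ^ α : ℝ) : ℂ) * cexp (-I * (Real.sign k : ℂ) * π * α / 2) := by
  have hexp : -I * (Real.sign k : ℂ) * π * α / 2 = ((-Real.sign k * (π / 2) * α : ℝ) : ℂ) * I := by
    push_cast; ring
  rw [cpow_ofReal, arg_neg_I_mul_ofReal, hexp, exp_mul_I, ← ofReal_cos, ← ofReal_sin]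
  simp

lemma exp_sub_one_sub_eq_tsum (z : ℂ) :
    cexp z - 1 - z = ∑' n : ℕ, z ^ (n + 2) / (n + 2).factorial := by
  rw [exp_eq_exp_ℂ, NormedSpace.exp_eq_tsum_div]
  beta_reduce
  rw [← (NormedSpace.expSeries_div_summable z).sum_add_tsum_nat_add 2]
  simp [Finset.sum_range_succ, add_assoc]

lemma integral_Ioc_tsum_mul_rpow {c : ℕ → ℂ} {a β : ℝ} (ha : 0 < a) (hβ : -1 < β)
    (hc : Summable fun n => ‖c n‖ * a ^ n) :
    ∫ y in Ioc 0 a, ∑' n : ℕ, c n * ((y ^ (n + β) : ℝ) : ℂ)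
      = ∑' n : ℕ, c n * ((a ^ (n + β + 1) / (n + β + 1) : ℝ) : ℂ) := by
  have hr (n : ℕ) : -1 < (n : ℝ) + β := by linarith [n.cast_nonneg (α := ℝ)]
  have hnorm (n : ℕ) : ∫ y in Ioc 0 a, ‖c n * ((y ^ (n + β) : ℝ) : ℂ)‖
      = ‖c n‖ * (a ^ (n + β + 1) / (n + β + 1)) := by
    rw [← integral_Ioc_rpow ha.le (hr n), ← integral_const_mul]
    refine setIntegral_congr_fun measurableSet_Ioc fun y hy => ?_
    rw [norm_mul, norm_real, norm_of_nonneg (rpow_nonneg hy.1.le _)]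
  have hbound (n : ℕ) : ‖c n‖ * (a ^ (n + β + 1) / (n + β + 1))
      ≤ a ^ (β + 1) / (β + 1) * (‖c n‖ * a ^ n) := by
    rw [add_assoc, rpow_add ha, rpow_natCast]
    have : 1 / ((n : ℝ) + (β + 1)) ≤ 1 / (β + 1) :=
      one_div_le_one_div_of_le (by linarith) (by linarith [n.cast_nonneg (α := ℝ)])
    calc ‖c n‖ * (a ^ n * a ^ (β + 1) / (n + (β + 1)))
        = ‖c n‖ * a ^ n * a ^ (β + 1) * (1 / (n + (β + 1))) := by ring
      _ ≤ ‖c n‖ * a ^ n * a ^ (β + 1) * (1 / (β + 1)) := by gcongr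
      _ = _ := by ring
  rw [← integral_tsum_of_summable_integral_norm]
  · congr 1 with n
    rw [integral_const_mul, integral_complex_ofReal, integral_Ioc_rpow ha.le (hr n)]
  · exact fun n => ((integrableOn_Ioc_rpow ha.le (hr n)).ofReal (𝕜 := ℂ)).const_mul (c n)
  · refine (hc.mul_left _).of_nonneg_of_le (fun n => ?_) (fun n => (hnorm n).trans_le (hbound n))
    exact integral_nonneg fun _ => norm_nonneg _

lemma summable_norm_pow_div_factorial_mul_pow (z : ℂ) {a : ℝ} (ha : 0 < a) :
    Summable fun n : ℕ => ‖z ^ (n + 2) / (n + 2).factorial‖ * a ^ n := by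
  refine (((summable_nat_add_iff 2).2 (Real.summable_pow_div_factorial (‖z‖ * a))).div_const
    (a ^ 2)).congr fun n => ?_
  rw [norm_div, norm_pow, Complex.norm_natCast, mul_pow, pow_add]
  field_simp
  ring

lemma levyKernel_neg_I_mul_eq_tsum (α k : ℝ) {y : ℝ} (hy : 0 < y) :
    levyKernel α (-I * k) y = ∑' n : ℕ,
      (I * k) ^ (n + 2) / (n + 2).factorial * ((y ^ (n + (1 - α)) : ℝ) : ℂ) := by
  have hrpow (n : ℕ) :
      ((y ^ (n + (1 - α)) : ℝ) : ℂ) = (y : ℂ) ^ (n + 2) * ((y ^ (-1 - α) : ℝ) : ℂ) := by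
    rw [← ofReal_pow, ← ofReal_mul, mul_comm, ← rpow_add_natCast hy.ne']
    push_cast; ring_nf
  have hexp : cexp (-(-I * k * y)) - 1 + -I * k * y = cexp (I * k * y) - 1 - I * k * y := by
    ring_nf
  simp_rw [levyKernel, hexp, exp_sub_one_sub_eq_tsum, ← tsum_mul_right, hrpow, mul_pow]
  congr 1 with n
  ring

lemma integral_Ioc_levyKernel {α a : ℝ} (hα : α < 2) (ha : 0 < a) (k : ℝ) :
    ∫ y in Ioc 0 a, levyKernel α (-I * k) y
      = ∑' n : ℕ, (I * k) ^ (n + 2) * ((a ^ ((n + 2 : ℝ) - α) : ℝ) : ℂ) /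
          ((((n + 2 : ℝ) - α : ℝ) : ℂ) * ((Real.Gamma ((n + 2 : ℝ) + 1) : ℝ) : ℂ)) := by
  rw [setIntegral_congr_fun measurableSet_Ioc fun y hy => levyKernel_neg_I_mul_eq_tsum α k hy.1,
    integral_Ioc_tsum_mul_rpow ha (by linarith) (summable_norm_pow_div_factorial_mul_pow _ ha)]
  congr 1 with n
  have hΓ : Real.Gamma ((n + 2 : ℝ) + 1) = (n + 2).factorial := by
    exact_mod_cast Real.Gamma_nat_eq_factorial (n + 2)
  rw [hΓ, show (n : ℝ) + (1 - α) + 1 = n + 2 - α by ring]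
  push_cast
  field_simp

theorem stmt_11 (a α k : ℝ) (ha : 0 < a) (hα : α ∈ Set.Ioo (1 : ℝ) 2) :
    (∫ y in Set.Ioi a,
        (Complex.exp (Complex.I * k * y) - 1 - Complex.I * k * y) / ((y ^ (1 + α) : ℝ) : ℂ))
      = ((|k| ^ α * Real.Gamma (-α) : ℝ) : ℂ) *
          Complex.exp (-Complex.I * (Real.sign k : ℂ) * (π : ℂ) * (α : ℂ) / 2)
        - ∑' n : ℕ, (Complex.I * k) ^ (n + 2) * ((a ^ ((n + 2 : ℝ) - α) : ℝ) : ℂ) /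
            ((((n + 2 : ℝ) - α : ℝ) : ℂ) * ((Real.Gamma ((n + 2 : ℝ) + 1) : ℝ) : ℂ)) := by
  have hs : 0 ≤ (-I * k : ℂ).re := by simp
  have hintegrand (y : ℝ) (hy : y ∈ Ioi a) :
      (cexp (I * k * y) - 1 - I * k * y) / ((y ^ (1 + α) : ℝ) : ℂ) = levyKernel α (-I * k) y := by
    rw [levyKernel, show -1 - α = -(1 + α) by ring, rpow_neg (ha.trans hy).le, ofReal_inv,
      div_eq_mul_inv]
    ring_nf
  have hsplit : levyIntegral α (-I * k)
      = (∫ y in Ioc 0 a, levyKernel α (-I * k) y) + ∫ y in Ioi a, levyKernel α (-I * k) y := by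
    have hint := integrableOn_levyKernel hα hs
    rw [levyIntegral, ← Ioc_union_Ioi_eq_Ioi ha.le] at *
    exact setIntegral_union (Ioc_disjoint_Ioi le_rfl) measurableSet_Ioi
      (hint.mono_set subset_union_left) (hint.mono_set subset_union_right)
  rw [setIntegral_congr_fun measurableSet_Ioi hintegrand, ← integral_Ioc_levyKernel hα.2 ha k,
    eq_sub_iff_add_eq, add_comm, ← hsplit, levyIntegral_eq hα hs, neg_I_mul_ofReal_cpow]
  push_cast
  ring
end

section
/- For the generator A of the CAM process, A p = −(L + E²/2)(y p)′ + (1/2)([(Ey+g)² + b²] p)″, the stationary density p_s(y) = (1/N)[(Ey+g)²+b²]^{−(ν+1)} exp((2gν/b) arctan((Ey+g)/b)) with ν = −(L/E² + 1/2) satisfies A p_s = 0 pointwise on ℝ (for E, b > 0, L < 0). -/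
/-!
With `u y = (E y + g)² + b²`, the generator is in divergence form,
`A p = ((L + E²/2) y p - (u p)' / 2)'`, so it suffices that the flux `u p` satisfies
`(u p)' = 2 (L + E²/2) y p`. For `p = u^a exp (c arctan ((E y + g)/b))` one computes
`(u p)' = E (2 (a + 1)(E y + g) + c b) p`, and the choices `a = -(ν + 1)`, `c b = 2 g ν`
turn this into `-2 E² ν y p = (2 L + E²) y p`.
-/

open Real

noncomputable def pearsonIV (E g b a c : ℝ) (y : ℝ) : ℝ :=
  ((E * y + g) ^ 2 + b ^ 2) ^ a * exp (c * arctan ((E * y + g) / b))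

section Flux

variable {E g b : ℝ}

lemma hasDerivAt_arctan_affine_div (hb : b ≠ 0) (y : ℝ) :
    HasDerivAt (fun y => arctan ((E * y + g) / b)) (E * b / ((E * y + g) ^ 2 + b ^ 2)) y := by
  have h := (((hasDerivAt_id y).const_mul E).add_const g).div_const b |>.arctan
  refine h.congr_deriv ?_
  simp only [id]
  field_simp
  ring

lemma hasDerivAt_quadratic_mul_pearsonIV (hb : b ≠ 0) (a c y : ℝ) :
    HasDerivAt (fun y => ((E * y + g) ^ 2 + b ^ 2) * pearsonIV E g b a c y)
      (E * (2 * (a + 1) * (E * y + g) + c * b) * pearsonIV E g b a c y) y := by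
  have hu : ∀ y, (E * y + g) ^ 2 + b ^ 2 ≠ 0 := fun y => by positivity
  have hpow : HasDerivAt (fun y => ((E * y + g) ^ 2 + b ^ 2) ^ (a + 1))
      (2 * (E * y + g) * E * (a + 1) * ((E * y + g) ^ 2 + b ^ 2) ^ a) y := by
    have h := ((((hasDerivAt_id y).const_mul E).add_const g).pow 2).add_const (b ^ 2)
      |>.rpow_const (p := a + 1) (Or.inl (hu y))
    simpa using h
  have h := hpow.mul ((hasDerivAt_arctan_affine_div (E := E) (g := g) hb y).const_mul c).exp
  have hcombine : (fun y => ((E * y + g) ^ 2 + b ^ 2) * pearsonIV E g b a c y) =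
      fun y => ((E * y + g) ^ 2 + b ^ 2) ^ (a + 1) * exp (c * arctan ((E * y + g) / b)) := by
    funext y
    rw [pearsonIV, rpow_add_one (hu y)]
    ring
  rw [hcombine]
  refine h.congr_deriv ?_
  rw [pearsonIV, rpow_add_one (hu y)]
  field_simp

end Flux

lemma generator_eq_zero_of_hasDerivAt_flux {α : ℝ} {D p : ℝ → ℝ}
    (hflux : ∀ y, HasDerivAt (fun y => D y * p y) (2 * α * (y * p y)) y) (y : ℝ) :
    -α * deriv (fun y => y * p y) y + 1 / 2 * deriv (deriv (fun y => D y * p y)) y = 0 := by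
  have hderiv : deriv (fun y => D y * p y) = fun y => 2 * α * (y * p y) :=
    funext fun y => (hflux y).deriv
  rw [hderiv, deriv_const_mul_field]
  ring

theorem stmt_16_general (L E b g N : ℝ) (hE : 0 < E) (hb : 0 < b)
    (ν : ℝ) (hν : ν = -(L / E ^ 2 + 1 / 2))
    (p : ℝ → ℝ)
    (hp : ∀ y, p y = (1 / N) * ((E * y + g) ^ 2 + b ^ 2) ^ (-(ν + 1)) *
        Real.exp ((2 * g * ν / b) * Real.arctan ((E * y + g) / b))) :
    ∀ y : ℝ,
      -(L + E ^ 2 / 2) * deriv (fun y => y * p y) y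
        + (1 / 2) * deriv (deriv (fun y => ((E * y + g) ^ 2 + b ^ 2) * p y)) y = 0 := by
  have hp' : p = fun y => 1 / N * pearsonIV E g b (-(ν + 1)) (2 * g * ν / b) y := by
    funext y
    rw [hp, pearsonIV, mul_assoc]
  refine generator_eq_zero_of_hasDerivAt_flux fun y => ?_
  have h := (hasDerivAt_quadratic_mul_pearsonIV (E := E) (g := g) hb.ne'
    (-(ν + 1)) (2 * g * ν / b) y).const_mul (1 / N)
  subst hp' hν
  refine (h.congr_deriv ?_).congr_of_eventuallyEq (.of_forall fun y => by ring)
  field_simp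
  ring

theorem stmt_16 (L E b g N : ℝ) (hL : L < 0) (hE : 0 < E) (hb : 0 < b) (hN : 0 < N)
    (ν : ℝ) (hν : ν = -(L / E ^ 2 + 1 / 2))
    (p : ℝ → ℝ)
    (hp : ∀ y, p y = (1 / N) * ((E * y + g) ^ 2 + b ^ 2) ^ (-(ν + 1)) *
        Real.exp ((2 * g * ν / b) * Real.arctan ((E * y + g) / b))) :
    ∀ y : ℝ,
      -(L + E ^ 2 / 2) * deriv (fun y => y * p y) y
        + (1 / 2) * deriv (deriv (fun y => ((E * y + g) ^ 2 + b ^ 2) * p y)) y = 0 :=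
  stmt_16_general L E b g N hE hb ν hν p hp
end
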